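/- For every integer k ≥ 3 there exists a finite simple graph G with the following two properties: (i) there is a set M ⊆ V(G) with |M| = 2 such that G − M has a unique minimum vertex cover, and no set of size at most 1 has this property; and (ii) every set P ⊆ V(G) for which there exists a unique minimum vertex cover of G containing P satisfies |P| ≥ k. -/

import Mathlib

/-- `M` is a vertex cover of the finite simple graph `G`. -/
def IsVertexCover {V : Type*} (G : SimpleGraph V) (M : Finset V) : Prop :=
  ∀ ⦃u v : V⦄, G.Adj u v → u ∈ M ∨ v ∈ M

/-- `M` is a minimum vertex cover of `G`. -/
def IsMinVertexCover {V : Type*} (G : SimpleGraph V) (M : Finset V) : Prop :=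
  IsVertexCover G M ∧ ∀ M' : Finset V, IsVertexCover G M' → M.card ≤ M'.card

/-- `M` is a vertex cover of `G - S`, the subgraph of `G` induced on the
vertices outside `S`. -/
def IsVertexCoverDel {V : Type*} (G : SimpleGraph V) (S M : Finset V) : Prop :=
  (∀ x ∈ M, x ∉ S) ∧ ∀ ⦃u v : V⦄, G.Adj u v → u ∉ S → v ∉ S → u ∈ M ∨ v ∈ M

/-- `G - S` has a unique minimum vertex cover. -/
def HasUniqueMinVCDel {V : Type*} (G : SimpleGraph V) (S : Finset V) : Prop :=
  ∃! M : Finset V, IsVertexCoverDel G S M ∧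
    ∀ M' : Finset V, IsVertexCoverDel G S M' → M.card ≤ M'.card

/-!
Minimum vertex covers of `G - S` are the complements, inside `V ∖ S`, of the maximum independent
sets of `G` avoiding `S`, so all three properties are statements about maximum independent sets.

The graph: a clique on `A ∪ B` with `|A| = |B| = k`, a private neighbour `dᵢ` of each `bᵢ`, two
vertices `x, y` adjacent to all of `B` and to `z`, a vertex `w` adjacent to all of `A ∪ B`, and
`z` adjacent to all of `A`. Its maximum independent sets are `D ∪ {x, y, e}` for `e ∈ A ∪ {w}`,
`k + 1` sets sharing the core `D ∪ {x, y}`. Deleting one vertex either keeps two of them or takes a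
core vertex out of all of them, so the minimum cover is never unique; deleting `{x, y}` leaves
`D ∪ {w, z}` as the only maximum independent set. If `P` lies in a unique minimum cover, `P` avoids
exactly one set `D ∪ {x, y, e₀}` and must meet every other one in its extra vertex, so
`P ⊇ (A ∪ {w}) ∖ {e₀}`.
-/

open Finset

lemma subset_of_isIndepSet_of_mem {V : Type*} {G : SimpleGraph V} {T X : Finset V} {u : V}
    (hT : G.IsIndepSet T) (hu : u ∈ T) (h : ∀ v ∈ T, v ∉ X → G.Adj u v) : T ⊆ X := fun v hv => by
  by_contra hvX
  have huv := h v hv hvX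
  exact hT hu hv huv.ne huv

section VertexCoverIndepSet

variable {V : Type*} [Fintype V] [DecidableEq V] {G : SimpleGraph V} {S C T U P : Finset V}

def IsMinVertexCoverDel (G : SimpleGraph V) (S C : Finset V) : Prop :=
  IsVertexCoverDel G S C ∧ ∀ C' : Finset V, IsVertexCoverDel G S C' → #C ≤ #C'

def IsMaximumIndepSetDel (G : SimpleGraph V) (S T : Finset V) : Prop :=
  G.IsIndepSet T ∧ Disjoint T S ∧
    ∀ T' : Finset V, G.IsIndepSet T' → Disjoint T' S → #T' ≤ #T

lemma isVertexCoverDel_iff :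
    IsVertexCoverDel G S C ↔ Disjoint C S ∧ G.IsIndepSet ↑(S ∪ C)ᶜ := by
  rw [coe_compl, SimpleGraph.isIndepSet_compl_iff_isVertexCover, IsVertexCoverDel,
    disjoint_left]
  refine and_congr_right fun _ => ⟨fun h u v huv => ?_, fun h u v huv hu hv => ?_⟩
  · by_cases hu : u ∈ S <;> by_cases hv : v ∈ S <;> simp_all
  · simpa [hu, hv] using h huv

lemma disjoint_compl_union_left : Disjoint (S ∪ C)ᶜ S :=
  disjoint_left.2 fun _ h h' => mem_compl.1 h (mem_union_left _ h')

lemma compl_union_compl_union (h : Disjoint C S) : (S ∪ (S ∪ C)ᶜ)ᶜ = C := by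
  ext v
  have : v ∈ C → v ∉ S := fun hv => disjoint_left.1 h hv
  simp only [mem_compl, mem_union]
  tauto

lemma card_compl_union (h : Disjoint C S) : #(S ∪ C)ᶜ + #C = Fintype.card V - #S := by
  rw [card_compl, card_union_of_disjoint h.symm]
  have := card_le_univ (S ∪ C)
  rw [card_union_of_disjoint h.symm] at this
  omega

lemma isMinVertexCoverDel_iff :
    IsMinVertexCoverDel G S C ↔ Disjoint C S ∧ IsMaximumIndepSetDel G S (S ∪ C)ᶜ := by
  simp only [IsMinVertexCoverDel, IsMaximumIndepSetDel, isVertexCoverDel_iff]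
  constructor
  · rintro ⟨⟨hCS, hC⟩, hmin⟩
    refine ⟨hCS, hC, disjoint_compl_union_left, fun T hT hTS => ?_⟩
    have := hmin (S ∪ T)ᶜ ⟨disjoint_compl_union_left, by rwa [compl_union_compl_union hTS]⟩
    have := card_compl_union hCS
    have := card_compl_union hTS
    omega
  · rintro ⟨hCS, hC, -, hmax⟩
    refine ⟨⟨hCS, hC⟩, fun C' ⟨hC'S, hC'⟩ => ?_⟩
    have := hmax _ hC' disjoint_compl_union_left
    have := card_compl_union hCS
    have := card_compl_union hC'S
    omega

lemma hasUniqueMinVCDel_iff :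
    HasUniqueMinVCDel G S ↔ ∃! T, IsMaximumIndepSetDel G S T :=
  Equiv.existsUnique_subtype_congr
    { toFun := fun C => ⟨(S ∪ C)ᶜ, (isMinVertexCoverDel_iff.1 C.2).2⟩
      invFun := fun T => ⟨(S ∪ T)ᶜ, isMinVertexCoverDel_iff.2
        ⟨disjoint_compl_union_left, by rw [compl_union_compl_union T.2.2.1]; exact T.2⟩⟩
      left_inv := fun C => Subtype.ext (compl_union_compl_union (isMinVertexCoverDel_iff.1 C.2).1)
      right_inv := fun T => Subtype.ext (compl_union_compl_union T.2.2.1) }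

lemma isMinVertexCover_iff : IsMinVertexCover G U ↔ G.IsMaximumIndepSet Uᶜ := by
  have h := isMinVertexCoverDel_iff (G := G) (S := ∅) (C := U)
  simp only [IsMinVertexCoverDel, IsMaximumIndepSetDel, IsVertexCoverDel, IsMinVertexCover,
    IsVertexCover, SimpleGraph.isMaximumIndepSet_iff] at h ⊢
  simpa using h

lemma existsUnique_isMinVertexCover_superset_iff :
    (∃! U, IsMinVertexCover G U ∧ P ⊆ U) ↔ ∃! T, G.IsMaximumIndepSet T ∧ Disjoint P T :=
  (compl_involutive.toPerm _).existsUnique_congr fun U => by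
    simp [isMinVertexCover_iff, ← le_compl_iff_disjoint_right]

end VertexCoverIndepSet

inductive SepVertex (k : ℕ) where
  | a : Fin k → SepVertex k
  | b : Fin k → SepVertex k
  | d : Fin k → SepVertex k
  | x | y | w | z
deriving DecidableEq, Fintype

namespace SepVertex

variable {k : ℕ} {T P S : Finset (SepVertex k)} {e : SepVertex k}

def rel : SepVertex k → SepVertex k → Bool
  | a _, a _ | a _, b _ | b _, b _ => true
  | b i, d j => i == j
  | b _, x | b _, y | a _, w | b _, w => true
  | a _, z | x, z | y, z => true
  | _, _ => false

def graph (k : ℕ) : SimpleGraph (SepVertex k) :=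
  SimpleGraph.fromRel fun u v => rel u v

lemma graph_adj {u v : SepVertex k} : (graph k).Adj u v ↔ u ≠ v ∧ (rel u v ∨ rel v u) :=
  SimpleGraph.fromRel_adj _ u v

def dVerts (k : ℕ) : Finset (SepVertex k) := univ.map ⟨d, fun _ _ => d.inj⟩
def aVerts (k : ℕ) : Finset (SepVertex k) := univ.map ⟨a, fun _ _ => a.inj⟩
def core (k : ℕ) : Finset (SepVertex k) := insert x (insert y (dVerts k))
def extra (k : ℕ) : Finset (SepVertex k) := insert w (aVerts k)
def wzD (k : ℕ) : Finset (SepVertex k) := insert w (insert z (dVerts k))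
def bNonNbhd (i : Fin k) : Finset (SepVertex k) := insert (b i) (insert z ((dVerts k).erase (d i)))

@[simp] lemma mem_dVerts {u : SepVertex k} : u ∈ dVerts k ↔ ∃ i, d i = u := by simp [dVerts]; rfl
@[simp] lemma mem_aVerts {u : SepVertex k} : u ∈ aVerts k ↔ ∃ i, a i = u := by simp [aVerts]; rfl

lemma card_core : #(core k) = k + 2 := by simp [core, dVerts]

lemma notMem_core_of_mem_extra (he : e ∈ extra k) : e ∉ core k := by
  simp only [extra, mem_insert, mem_aVerts] at he
  rcases he with rfl | ⟨i, rfl⟩ <;> simp [core]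

lemma card_extra : #(extra k) = k + 1 := by simp [extra, aVerts]

lemma card_insert_core (he : e ∈ extra k) : #(insert e (core k)) = k + 3 := by
  rw [card_insert_of_notMem (notMem_core_of_mem_extra he), card_core]

lemma card_wzD : #(wzD k) = k + 2 := by simp [wzD, dVerts]

lemma card_bNonNbhd_le (i : Fin k) : #(bNonNbhd i) ≤ k + 1 := by
  have := card_insert_le z ((dVerts k).erase (d i))
  have := card_insert_le (b i) (insert z ((dVerts k).erase (d i)))
  have : #((dVerts k).erase (d i)) = k - 1 := by
    rw [card_erase_of_mem (mem_dVerts.2 ⟨i, rfl⟩)]; simp [dVerts]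
  have := i.pos
  simp only [bNonNbhd]
  omega

lemma isIndepSet_insert_core (he : e ∈ extra k) : (graph k).IsIndepSet ↑(insert e (core k)) := by
  simp only [extra, mem_insert, mem_aVerts] at he
  rintro u hu v hv huv
  simp only [core, coe_insert, Set.mem_insert_iff, mem_coe, mem_dVerts] at hu hv
  rcases he with rfl | ⟨i, rfl⟩ <;>
    rcases hu with rfl | rfl | rfl | ⟨_, rfl⟩ <;> rcases hv with rfl | rfl | rfl | ⟨_, rfl⟩ <;>
    simp_all [graph_adj, rel]

lemma isIndepSet_wzD : (graph k).IsIndepSet ↑(wzD k) := by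
  rintro u hu v hv huv
  simp only [wzD, coe_insert, Set.mem_insert_iff, mem_coe, mem_dVerts] at hu hv
  rcases hu with rfl | rfl | ⟨_, rfl⟩ <;> rcases hv with rfl | rfl | ⟨_, rfl⟩ <;>
    simp_all [graph_adj, rel]

lemma isIndepSet_cases (hT : (graph k).IsIndepSet T) :
    (∃ e ∈ extra k, T ⊆ insert e (core k)) ∨ T ⊆ wzD k ∨ ∃ i, T ⊆ bNonNbhd i := by
  by_cases hb : ∃ i, b i ∈ T
  · obtain ⟨i, hi⟩ := hb
    refine .inr (.inr ⟨i, subset_of_isIndepSet_of_mem hT hi fun v _ hv => ?_⟩)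
    cases v <;> simp_all [bNonNbhd, graph_adj, rel, eq_comm]
  simp only [not_exists] at hb
  by_cases ha : ∃ i, a i ∈ T
  · obtain ⟨i, hi⟩ := ha
    refine .inl ⟨a i, by simp [extra], subset_of_isIndepSet_of_mem hT hi fun v hvT hv => ?_⟩
    cases v <;> simp_all [core, graph_adj, rel, eq_comm]
  simp only [not_exists] at ha
  by_cases hz : z ∈ T
  · refine .inr (.inl (subset_of_isIndepSet_of_mem hT hz fun v hvT hv => ?_))
    cases v <;> simp_all [wzD, graph_adj, rel]
  · refine .inl ⟨w, by simp [extra], fun v hv => ?_⟩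
    cases v <;> simp_all [core]

lemma card_le_of_isIndepSet (hT : (graph k).IsIndepSet ↑T) : #T ≤ k + 3 := by
  rcases isIndepSet_cases hT with ⟨e, he, h⟩ | h | ⟨i, h⟩
  · exact (card_le_card h).trans (card_insert_core he).le
  · exact (card_le_card h).trans (card_wzD.trans_le (by omega))
  · exact (card_le_card h).trans ((card_bNonNbhd_le i).trans (by omega))

lemma exists_eq_insert_core (hT : (graph k).IsIndepSet ↑T) (h : k + 3 ≤ #T) :
    ∃ e ∈ extra k, T = insert e (core k) := by
  rcases isIndepSet_cases hT with ⟨e, he, hsub⟩ | hsub | ⟨i, hsub⟩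
  · exact ⟨e, he, eq_of_subset_of_card_le hsub (by rwa [card_insert_core he])⟩
  · have := card_le_card hsub
    rw [card_wzD] at this
    omega
  · have := card_le_card hsub
    have := card_bNonNbhd_le i
    omega

lemma isMaximumIndepSet_iff :
    (graph k).IsMaximumIndepSet T ↔ ∃ e ∈ extra k, T = insert e (core k) := by
  have hw : w ∈ extra k := mem_insert_self _ _
  constructor
  · rintro ⟨hT, hmax⟩
    refine exists_eq_insert_core hT ?_
    rw [← card_insert_core hw]
    exact hmax _ (isIndepSet_insert_core hw)
  · rintro ⟨e, he, rfl⟩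
    exact ⟨isIndepSet_insert_core he,
      fun T hT => (card_le_of_isIndepSet hT).trans (card_insert_core he).ge⟩

lemma subset_wzD_or_card_le (hT : (graph k).IsIndepSet ↑T) (hxy : Disjoint T {x, y}) :
    T ⊆ wzD k ∨ #T ≤ k + 1 := by
  rcases isIndepSet_cases hT with ⟨e, he, hsub⟩ | hsub | ⟨i, hsub⟩
  · right
    have hxy_sub : {x, y} ⊆ insert e (core k) := by simp [insert_subset_iff, core]
    have := card_le_card (subset_sdiff.2 ⟨hsub, hxy⟩)
    rw [card_sdiff_of_subset hxy_sub, card_insert_core he] at this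
    simpa using this
  · exact .inl hsub
  · exact .inr ((card_le_card hsub).trans (card_bNonNbhd_le i))

lemma isMaximumIndepSetDel_xy_iff : IsMaximumIndepSetDel (graph k) {x, y} T ↔ T = wzD k := by
  constructor
  · rintro ⟨hT, hTxy, hmax⟩
    have hcard := hmax _ isIndepSet_wzD (by simp [wzD])
    rcases subset_wzD_or_card_le hT hTxy with h | h
    · exact eq_of_subset_of_card_le h hcard
    · rw [card_wzD] at hcard
      omega
  · rintro rfl
    refine ⟨isIndepSet_wzD, by simp [wzD], fun T hT hTxy => ?_⟩
    rcases subset_wzD_or_card_le hT hTxy with h | h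
    · exact card_le_card h
    · rw [card_wzD]
      omega

lemma isMaximumIndepSetDel_insert_core_sdiff (hS : #S ≤ 1) (he : e ∈ extra k \ S) :
    IsMaximumIndepSetDel (graph k) S (insert e (core k) \ S) := by
  obtain ⟨he, heS⟩ := mem_sdiff.1 he
  refine ⟨(isIndepSet_insert_core he).mono (coe_subset.2 sdiff_subset), sdiff_disjoint,
    fun T hT hTS => ?_⟩
  by_cases hcore : Disjoint (core k) S
  · rw [sdiff_eq_self_of_disjoint (disjoint_insert_left.2 ⟨heS, hcore⟩), card_insert_core he]
    exact card_le_of_isIndepSet hT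
  · obtain ⟨v, hv, hvS⟩ := not_disjoint_iff.1 hcore
    have hlow := le_card_sdiff S (insert e (core k))
    rw [card_insert_core he] at hlow
    -- every independent set of size `k + 3` contains the core, hence meets `S`
    have hT : #T ≤ k + 2 := by
      by_contra hlt
      obtain ⟨e', -, rfl⟩ := exists_eq_insert_core hT (by omega)
      exact disjoint_left.1 hTS (mem_insert_of_mem hv) hvS
    omega

lemma exists_ne_isMaximumIndepSetDel (hk : 2 ≤ k) (hS : #S ≤ 1) :
    ∃ T₁ T₂, T₁ ≠ T₂ ∧ IsMaximumIndepSetDel (graph k) S T₁ ∧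
      IsMaximumIndepSetDel (graph k) S T₂ := by
  obtain ⟨e₁, he₁, e₂, he₂, hne⟩ : ∃ e₁ ∈ extra k \ S, ∃ e₂ ∈ extra k \ S, e₁ ≠ e₂ := by
    rw [← one_lt_card]
    have := le_card_sdiff S (extra k)
    rw [card_extra] at this
    omega
  refine ⟨_, _, fun h => ?_, isMaximumIndepSetDel_insert_core_sdiff hS he₁,
    isMaximumIndepSetDel_insert_core_sdiff hS he₂⟩
  have : e₁ ∈ insert e₂ (core k) \ S := h ▸ mem_sdiff.2 ⟨mem_insert_self _ _, (mem_sdiff.1 he₁).2⟩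
  rcases mem_insert.1 (mem_sdiff.1 this).1 with h | h
  exacts [hne h, notMem_core_of_mem_extra (mem_sdiff.1 he₁).1 h]

lemma le_card_of_existsUnique_isMaximumIndepSet_disjoint
    (hP : ∃! T, (graph k).IsMaximumIndepSet T ∧ Disjoint P T) : k ≤ #P := by
  obtain ⟨_, ⟨hmax, hPT⟩, huniq⟩ := hP
  obtain ⟨e₀, he₀, rfl⟩ := isMaximumIndepSet_iff.1 hmax
  have hsub : (extra k).erase e₀ ⊆ P := by
    intro e he
    obtain ⟨hne, he⟩ := mem_erase.1 he
    by_contra heP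
    have hPcore : Disjoint P (core k) := hPT.mono_right (subset_insert _ _)
    have heq := huniq _ ⟨isMaximumIndepSet_iff.2 ⟨e, he, rfl⟩,
      disjoint_insert_right.2 ⟨heP, hPcore⟩⟩
    rcases mem_insert.1 (heq ▸ mem_insert_self e (core k)) with h | h
    exacts [hne h, notMem_core_of_mem_extra he h]
  calc k = #((extra k).erase e₀) := by rw [card_erase_of_mem he₀, card_extra]; rfl
    _ ≤ #P := card_le_card hsub

end SepVertex

/-- For every `k ≥ 3` there is a finite graph `G` such that (i) some set `M` of
size 2 is an MU-VC solution while no set of size at most 1 is, and (ii) every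
PAU-VC solution `P` of `G` has size at least `k`. -/
theorem exists_graph_muvc_two_pauvc_ge (k : ℕ) (hk : 3 ≤ k) :
    ∃ (V : Type) (_ : Fintype V) (_ : DecidableEq V) (G : SimpleGraph V),
      (∃ M : Finset V, M.card = 2 ∧ HasUniqueMinVCDel G M) ∧
      (∀ M : Finset V, M.card ≤ 1 → ¬ HasUniqueMinVCDel G M) ∧
      (∀ P : Finset V,
        (∃! U : Finset V, IsMinVertexCover G U ∧ P ⊆ U) → k ≤ P.card) := by
  refine ⟨SepVertex k, inferInstance, inferInstance, SepVertex.graph k, ⟨{.x, .y}, by simp, ?_⟩,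
    fun S hS hU => ?_, fun P hP => ?_⟩
  · have hxy := @SepVertex.isMaximumIndepSetDel_xy_iff k
    exact hasUniqueMinVCDel_iff.2 ⟨_, hxy.2 rfl, fun _ => hxy.1⟩
  · obtain ⟨T₁, T₂, hne, h₁, h₂⟩ := SepVertex.exists_ne_isMaximumIndepSetDel (by omega) hS
    exact hne ((hasUniqueMinVCDel_iff.1 hU).unique h₁ h₂)
  · exact SepVertex.le_card_of_existsUnique_isMaximumIndepSet_disjoint
      (existsUnique_isMinVertexCover_superset_iff.1 hP)
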